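/- Let k have characteristic zero, m ≥ 2, n = 2m, σ(x_i) = x_{2m-i+1} the coordinate-reversing automorphism, and f = D(f')^2 - 2·D^2(f')·f' with D, f' as above. Then σ(f) = f, and consequently D'(f) = 0 where D' = σ ∘ D ∘ σ. -/

import Mathlib

/-!
Index the variables from 0 and write `x_i x_j` as `s^i t^j`, with `x_i = 0` for `i ≥ n`. Then `D`
becomes the operator `(n-1)(s+t) - (s²∂_s + t²∂_t)` on `k[s,t]` and `f'` becomes
`½ (t-s)^(n-2)`. Since `s²∂_s + t²∂_t` multiplies `t - s` by `s + t`, one reads off that `D` maps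
`(t-s)^(n-2) ↦ (s+t)(t-s)^(n-2) ↦ 2st(t-s)^(n-2) ↦ 0`, while `σ`, which reverses the indices,
exchanges `(t-s)^(n-2)` with `st(t-s)^(n-2)` and fixes `(s+t)(t-s)^(n-2)` because `n - 2` is even.
Hence `D²f' = 2σ(f')`, `D(σ f') = 0` and `σ(D f') = D f'`, from which `σ f = f` and `D f = 0`
follow formally; finally `D' f = σ (D (σ f)) = 0`.
-/

open MvPolynomial Finset

theorem Derivation.map_pow_of_map_eq_mul {R A : Type*} [CommSemiring R] [CommSemiring A]
    [Algebra R A] (E : Derivation R A A) {a b : A} (h : E a = a * b) (n : ℕ) :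
    E (a ^ n) = n • (a ^ n * b) := by
  induction n with
  | zero => simp
  | succ n ih => rw [pow_succ, E.leibniz, ih, h, smul_eq_mul, smul_eq_mul, succ_nsmul]; ring

theorem Derivation.sq_sub_two_mul_invariant {R A F : Type*} [CommSemiring R] [CommRing A]
    [Algebra R A] [FunLike F A A] [RingHomClass F A A] (D : Derivation R A A) (σ : F) {g : A}
    (hD2 : D (D g) = 2 * σ g) (hσσ : σ (σ g) = g) (hσD : σ (D g) = D g)
    (hDσ : D (σ g) = 0) :
    σ (D g ^ 2 - 2 * D (D g) * g) = D g ^ 2 - 2 * D (D g) * g ∧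
      D (D g ^ 2 - 2 * D (D g) * g) = 0 := by
  rw [hD2]
  constructor
  · simp only [map_sub, map_mul, map_pow, map_ofNat, hσD, hσσ]
    ring
  · have h2 : D 2 = 0 := by exact_mod_cast D.map_natCast 2
    simp only [map_sub, D.leibniz, D.leibniz_pow, hD2, hDσ, h2, smul_eq_mul]
    ring

section RaisingOperator

variable {k : Type*} [CommRing k]

variable (k) in
noncomputable def sqEuler : Derivation k (MvPolynomial (Fin 2) k) (MvPolynomial (Fin 2) k) :=
  (X 0 ^ 2 : MvPolynomial (Fin 2) k) • pderiv 0 + (X 1 ^ 2 : MvPolynomial (Fin 2) k) • pderiv 1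

theorem sqEuler_X (i : Fin 2) : sqEuler k (X i) = X i * X i := by
  fin_cases i <;> simp [sqEuler, sq]

theorem sqEuler_sub_pow (N : ℕ) :
    sqEuler k ((X 1 - X 0) ^ N) = N • ((X 1 - X 0) ^ N * (X 0 + X 1)) :=
  (sqEuler k).map_pow_of_map_eq_mul (by rw [map_sub, sqEuler_X, sqEuler_X]; ring) N

noncomputable def raiseOp (w : k) : MvPolynomial (Fin 2) k →ₗ[k] MvPolynomial (Fin 2) k :=
  w • LinearMap.mulLeft k (X 0 + X 1) - (sqEuler k).toLinearMap

theorem raiseOp_apply (w : k) (P : MvPolynomial (Fin 2) k) :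
    raiseOp w P = w • ((X 0 + X 1) * P) - sqEuler k P := rfl

theorem raiseOp_X_pow_mul_X_pow (w : k) (i j : ℕ) :
    raiseOp w (X 0 ^ i * X 1 ^ j) =
      (w - i) • (X 0 ^ (i + 1) * X 1 ^ j) + (w - j) • (X 0 ^ i * X 1 ^ (j + 1)) := by
  rw [raiseOp_apply, Derivation.leibniz, (sqEuler k).map_pow_of_map_eq_mul (sqEuler_X 0),
    (sqEuler k).map_pow_of_map_eq_mul (sqEuler_X 1)]
  simp only [smul_eq_C_mul, nsmul_eq_mul, smul_eq_mul, map_sub, map_natCast]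
  ring

theorem raiseOp_sub_pow (N : ℕ) :
    raiseOp (N + 1 : k) ((X 1 - X 0) ^ N) = (X 0 + X 1) * (X 1 - X 0) ^ N := by
  rw [raiseOp_apply, sqEuler_sub_pow, smul_eq_C_mul, nsmul_eq_mul]
  simp only [map_add, map_natCast, map_one]
  ring

theorem raiseOp_add_mul_sub_pow (N : ℕ) :
    raiseOp (N + 1 : k) ((X 0 + X 1) * (X 1 - X 0) ^ N) = 2 * (X 0 * X 1 * (X 1 - X 0) ^ N) := by
  rw [raiseOp_apply, Derivation.leibniz, sqEuler_sub_pow, map_add, sqEuler_X, sqEuler_X,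
    smul_eq_C_mul, nsmul_eq_mul]
  simp only [smul_eq_mul, map_add, map_natCast, map_one]
  ring

theorem raiseOp_mul_mul_sub_pow (N : ℕ) :
    raiseOp (N + 1 : k) (X 0 * X 1 * (X 1 - X 0) ^ N) = 0 := by
  rw [raiseOp_apply, Derivation.leibniz, Derivation.leibniz, sqEuler_sub_pow, sqEuler_X,
    sqEuler_X, smul_eq_C_mul, nsmul_eq_mul]
  simp only [smul_eq_mul, map_add, map_natCast, map_one]
  ring

end RaisingOperator

section QuadEval

variable {k A : Type*} [CommRing k] [CommRing A] [Algebra k A]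

noncomputable def quadEval (e : ℕ → A) : MvPolynomial (Fin 2) k →ₗ[k] A :=
  (basisMonomials (Fin 2) k).constr k fun μ => e (μ 0) * e (μ 1)

theorem quadEval_X_pow_mul_X_pow (e : ℕ → A) (i j : ℕ) :
    quadEval e (X 0 ^ i * X 1 ^ j : MvPolynomial (Fin 2) k) = e i * e j := by
  have := (basisMonomials (Fin 2) k).constr_basis k (fun μ => e (μ 0) * e (μ 1))
    (Finsupp.single 0 i + Finsupp.single 1 j)
  rw [coe_basisMonomials] at this
  simpa [quadEval, X_pow_eq_monomial, monomial_mul] using this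

theorem Derivation.map_quadEval (D : Derivation k A A) {e : ℕ → A} {w : k}
    (hD : ∀ i, D (e i) = (w - i) • e (i + 1)) (P : MvPolynomial (Fin 2) k) :
    D (quadEval e P) = quadEval e (raiseOp w P) := by
  induction P using MvPolynomial.induction_on' with
  | monomial μ c =>
    rw [monomial_fin_two, mul_assoc, ← smul_eq_C_mul]
    simp only [_root_.map_smul, D.map_smul, raiseOp_X_pow_mul_X_pow, map_add,
      quadEval_X_pow_mul_X_pow, D.leibniz, hD]
    simp only [smul_eq_mul, Algebra.smul_def, map_sub]
    ring
  | add p q hp hq => rw [map_add, map_add, map_add, hp, hq, map_add]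

theorem Derivation.map_quadEval_sub_pow (D : Derivation k A A) {e : ℕ → A} {N : ℕ}
    (hD : ∀ i, D (e i) = ((N + 1 : k) - i) • e (i + 1)) :
    D (quadEval e ((X 1 - X 0) ^ N : MvPolynomial (Fin 2) k)) =
      quadEval e ((X 0 + X 1) * (X 1 - X 0) ^ N : MvPolynomial (Fin 2) k) := by
  rw [D.map_quadEval hD, raiseOp_sub_pow]

theorem Derivation.map_quadEval_add_mul_sub_pow (D : Derivation k A A) {e : ℕ → A} {N : ℕ}
    (hD : ∀ i, D (e i) = ((N + 1 : k) - i) • e (i + 1)) :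
    D (quadEval e ((X 0 + X 1) * (X 1 - X 0) ^ N : MvPolynomial (Fin 2) k)) =
      2 * quadEval e (X 0 * X 1 * (X 1 - X 0) ^ N : MvPolynomial (Fin 2) k) := by
  rw [D.map_quadEval hD, raiseOp_add_mul_sub_pow, two_mul, map_add, two_mul]

theorem Derivation.map_quadEval_mul_mul_sub_pow (D : Derivation k A A) {e : ℕ → A} {N : ℕ}
    (hD : ∀ i, D (e i) = ((N + 1 : k) - i) • e (i + 1)) :
    D (quadEval e (X 0 * X 1 * (X 1 - X 0) ^ N : MvPolynomial (Fin 2) k)) = 0 := by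
  rw [D.map_quadEval hD, raiseOp_mul_mul_sub_pow, map_zero]

theorem quadEval_X_pow_mul_X_pow_mul_sub_pow (e : ℕ → A) (a b N : ℕ) :
    quadEval e (X 0 ^ a * X 1 ^ b * (X 1 - X 0) ^ N : MvPolynomial (Fin 2) k) =
      ∑ i ∈ range (N + 1), ((-1) ^ i * N.choose i : k) • (e (a + i) * e (b + (N - i))) := by
  rw [sub_eq_neg_add, add_pow, mul_sum, map_sum]
  refine sum_congr rfl fun i _ => ?_
  rw [← quadEval_X_pow_mul_X_pow (k := k), ← map_smul, smul_eq_C_mul]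
  simp only [map_mul, map_pow, map_neg, map_one, map_natCast]
  congr 1
  ring

theorem neg_one_pow_mul_choose_sub_of_even {N i : ℕ} (hN : Even N) (hi : i ≤ N) :
    ((-1) ^ (N - i) * N.choose (N - i) : k) = (-1) ^ i * N.choose i := by
  rw [Nat.choose_symm hi, neg_one_pow_congr]
  rwa [← Nat.even_add, Nat.sub_add_cancel hi]

theorem map_quadEval_X_pow_mul_X_pow_mul_sub_pow {F : Type*} [FunLike F A A]
    [AlgHomClass F k A A] (σ : F) {e : ℕ → A} {N : ℕ} (hN : Even N)
    (hσ : ∀ i ≤ N + 1, σ (e i) = e (N + 1 - i)) {a b : ℕ} (ha : a ≤ 1) (hb : b ≤ 1) :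
    σ (quadEval e (X 0 ^ a * X 1 ^ b * (X 1 - X 0) ^ N : MvPolynomial (Fin 2) k)) =
      quadEval e (X 0 ^ (1 - a) * X 1 ^ (1 - b) * (X 1 - X 0) ^ N : MvPolynomial (Fin 2) k) := by
  rw [quadEval_X_pow_mul_X_pow_mul_sub_pow, quadEval_X_pow_mul_X_pow_mul_sub_pow, map_sum,
    ← sum_range_reflect]
  refine sum_congr rfl fun i hi => ?_
  have hi : i ≤ N := Nat.lt_succ_iff.mp (mem_range.mp hi)
  rw [map_smul, map_mul, hσ _ (by omega), hσ _ (by omega), Nat.add_sub_cancel,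
    neg_one_pow_mul_choose_sub_of_even hN hi, Nat.sub_sub_self hi]
  congr 3 <;> omega

theorem map_quadEval_sub_pow {F : Type*} [FunLike F A A] [AlgHomClass F k A A] (σ : F)
    {e : ℕ → A} {N : ℕ} (hN : Even N) (hσ : ∀ i ≤ N + 1, σ (e i) = e (N + 1 - i)) :
    σ (quadEval e ((X 1 - X 0) ^ N : MvPolynomial (Fin 2) k)) =
      quadEval e (X 0 * X 1 * (X 1 - X 0) ^ N : MvPolynomial (Fin 2) k) := by
  simpa using map_quadEval_X_pow_mul_X_pow_mul_sub_pow (k := k) σ hN hσ zero_le_one zero_le_one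

theorem map_quadEval_mul_mul_sub_pow {F : Type*} [FunLike F A A] [AlgHomClass F k A A] (σ : F)
    {e : ℕ → A} {N : ℕ} (hN : Even N) (hσ : ∀ i ≤ N + 1, σ (e i) = e (N + 1 - i)) :
    σ (quadEval e (X 0 * X 1 * (X 1 - X 0) ^ N : MvPolynomial (Fin 2) k)) =
      quadEval e ((X 1 - X 0) ^ N : MvPolynomial (Fin 2) k) := by
  simpa using map_quadEval_X_pow_mul_X_pow_mul_sub_pow (k := k) σ hN hσ le_rfl le_rfl

theorem map_quadEval_add_mul_sub_pow {F : Type*} [FunLike F A A] [AlgHomClass F k A A] (σ : F)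
    {e : ℕ → A} {N : ℕ} (hN : Even N) (hσ : ∀ i ≤ N + 1, σ (e i) = e (N + 1 - i)) :
    σ (quadEval e ((X 0 + X 1) * (X 1 - X 0) ^ N : MvPolynomial (Fin 2) k)) =
      quadEval e ((X 0 + X 1) * (X 1 - X 0) ^ N : MvPolynomial (Fin 2) k) := by
  have h₁₀ := map_quadEval_X_pow_mul_X_pow_mul_sub_pow (k := k) σ hN hσ le_rfl zero_le_one
  have h₀₁ := map_quadEval_X_pow_mul_X_pow_mul_sub_pow (k := k) σ hN hσ zero_le_one le_rfl
  simp only [pow_one, pow_zero, mul_one, one_mul, Nat.sub_zero, Nat.sub_self] at h₁₀ h₀₁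
  rw [add_mul, map_add, map_add, h₁₀, h₀₁, add_comm]

end QuadEval

section VarOrZero

variable {k : Type*} [CommRing k]

variable (k) in
/-- Padding by zero makes `D x_i = (n - 1 - i) x_{i+1}` hold for every `i : ℕ`. -/
noncomputable def varOrZero (n i : ℕ) : MvPolynomial (Fin n) k :=
  if h : i < n then X ⟨i, h⟩ else 0

theorem Derivation.map_varOrZero {n : ℕ}
    (D : Derivation k (MvPolynomial (Fin n) k) (MvPolynomial (Fin n) k))
    (hD : ∀ j : Fin n, D (X j) =
      if h : (j : ℕ) + 1 < n then (n - ((j : ℕ) + 1)) • X (⟨(j : ℕ) + 1, h⟩ : Fin n)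
      else 0)
    (i : ℕ) : D (varOrZero k n i) = ((n : k) - 1 - i) • varOrZero k n (i + 1) := by
  unfold varOrZero
  by_cases hi : i + 1 < n
  · rw [dif_pos (by omega), dif_pos hi, hD, dif_pos hi, ← Nat.cast_smul_eq_nsmul k]
    congr 1
    rw [Nat.cast_sub hi.le]
    push_cast
    ring
  by_cases hi' : i < n
  · rw [dif_pos hi', dif_neg hi, hD, dif_neg hi, smul_zero]
  · rw [dif_neg hi', dif_neg hi, map_zero, smul_zero]

theorem map_varOrZero_of_map_X {n : ℕ} {σ : MvPolynomial (Fin n) k → MvPolynomial (Fin n) k}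
    (hσ : ∀ j : Fin n, σ (X j) = X j.rev) {i : ℕ} (hi : i < n) :
    σ (varOrZero k n i) = varOrZero k n (n - 1 - i) := by
  rw [varOrZero, varOrZero, dif_pos hi, dif_pos (by omega), hσ]
  congr 1
  ext
  simp only [Fin.val_rev]
  omega

theorem sum_fin_eq_quadEval_sub_pow {n : ℕ} (hn : 2 ≤ n) :
    (∑ i : Fin n, (((-1:k) ^ (i : ℕ)) * (Nat.choose (n - 2) (i : ℕ) : k)) •
        (X i * X (⟨n - 2 - (i : ℕ), by omega⟩ : Fin n)) : MvPolynomial (Fin n) k) =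
      quadEval (varOrZero k n) ((X 1 - X 0 : MvPolynomial (Fin 2) k) ^ (n - 2)) := by
  have := quadEval_X_pow_mul_X_pow_mul_sub_pow (k := k) (varOrZero k n) 0 0 (n - 2)
  simp only [pow_zero, one_mul, zero_add] at this
  rw [this, sum_subset (range_subset_range.mpr (by omega : n - 2 + 1 ≤ n)) fun i _ hi => by
    rw [Nat.choose_eq_zero_of_lt (by simpa using hi), Nat.cast_zero, mul_zero, zero_smul],
    ← Fin.sum_univ_eq_sum_range]
  refine sum_congr rfl fun i _ => ?_
  rw [varOrZero, varOrZero, dif_pos i.isLt, dif_pos (by omega)]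

end VarOrZero

theorem sigma_fixes_f_even (k : Type*) [Field k] (m : ℕ)
    (D : Derivation k (MvPolynomial (Fin (2*m)) k) (MvPolynomial (Fin (2*m)) k))
    (hD : ∀ j : Fin (2*m), D (X j) =
      if h : (j : ℕ) + 1 < 2*m then ((2*m) - ((j : ℕ) + 1)) • X (⟨(j : ℕ) + 1, h⟩ : Fin (2*m)) else 0)
    (D' : Derivation k (MvPolynomial (Fin (2*m)) k) (MvPolynomial (Fin (2*m)) k))
    (σ : MvPolynomial (Fin (2*m)) k ≃ₐ[k] MvPolynomial (Fin (2*m)) k)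
    (hσ : ∀ i : Fin (2*m), σ (X i) = X i.rev)
    (hconj : ∀ p, D' p = σ (D (σ p)))
    (f' : MvPolynomial (Fin (2*m)) k)
    (hf' : f' = (2:k)⁻¹ • ∑ i : Fin (2*m),
      (((-1:k) ^ (i : ℕ)) * (Nat.choose (2*m-2) (i : ℕ) : k)) •
        (X i * X (⟨2*m-2-(i : ℕ), by omega⟩ : Fin (2*m))))
    (f : MvPolynomial (Fin (2*m)) k)
    (hf : f = (D f')^2 - 2 * ((⇑D)^[2] f') * f') :
    σ f = f ∧ D' f = 0 := by
  obtain rfl | hm := Nat.eq_zero_or_pos m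
  · subst hf hf'
    simp
  obtain ⟨N, hN⟩ : ∃ N, 2 * m = N + 2 := ⟨2 * m - 2, by omega⟩
  have hf'Q : f' = (2:k)⁻¹ •
      quadEval (varOrZero k (2 * m)) ((X 1 - X 0 : MvPolynomial (Fin 2) k) ^ N) := by
    rw [hf', sum_fin_eq_quadEval_sub_pow (by omega), show 2 * m - 2 = N by omega]
  have hDe : ∀ i, D (varOrZero k (2 * m) i) = ((N + 1 : k) - i) • varOrZero k (2 * m) (i + 1) :=
    fun i => by rw [D.map_varOrZero hD, hN]; congr 1; push_cast; ring
  have hσe : ∀ i ≤ N + 1, σ (varOrZero k (2 * m) i) = varOrZero k (2 * m) (N + 1 - i) :=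
    fun i hi => by rw [map_varOrZero_of_map_X hσ (by omega)]; congr 1; omega
  have hEven : Even N := ⟨m - 1, by omega⟩
  obtain ⟨hσf, hDf⟩ := D.sq_sub_two_mul_invariant σ (g := f')
    (by rw [hf'Q, D.map_smul, D.map_smul, D.map_quadEval_sub_pow hDe,
      D.map_quadEval_add_mul_sub_pow hDe, map_smul, map_quadEval_sub_pow σ hEven hσe,
      mul_smul_comm])
    (by rw [hf'Q, map_smul, map_smul, map_quadEval_sub_pow σ hEven hσe,
      map_quadEval_mul_mul_sub_pow σ hEven hσe])
    (by rw [hf'Q, D.map_smul, map_smul, D.map_quadEval_sub_pow hDe,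
      map_quadEval_add_mul_sub_pow σ hEven hσe])
    (by rw [hf'Q, map_smul, D.map_smul, map_quadEval_sub_pow σ hEven hσe,
      D.map_quadEval_mul_mul_sub_pow hDe, smul_zero])
  replace hf : f = D f' ^ 2 - 2 * D (D f') * f' := hf
  rw [hf]
  exact ⟨hσf, by rw [hconj, hσf, hDf, map_zero]⟩
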